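/- Let f(x,y) = sqrt((x+y−2)/(x+y)) − sqrt((x+y−2)/(x·y)). For every integer y ≥ 3, one has f(1,3) + f(3,y) > 0. -/
import Mathlib


noncomputable def f (x y : ℝ) : ℝ :=
  Real.sqrt ((x + y - 2) / (x + y)) - Real.sqrt ((x + y - 2) / (x * y))

theorem f13_add_f3y_pos (y : ℤ) (hy : 3 ≤ y) :
    f 1 3 + f 3 y > 0 := by
  have hz : (3 : ℝ) ≤ (y : ℝ) := by exact_mod_cast hy
  set z : ℝ := (y : ℝ) with hzdef
  have hz3 : (0 : ℝ) < 3 + z := by linarith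
  have hz0 : (0 : ℝ) < 3 * z := by linarith
  have h1 : Real.sqrt (2/3) ≤ Real.sqrt ((3 + z - 2) / (3 + z)) := by
    apply Real.sqrt_le_sqrt
    rw [div_le_div_iff₀ (by norm_num) hz3]
    linarith
  have h2 : Real.sqrt ((3 + z - 2) / (3 * z)) ≤ 2/3 := by
    have : (3 + z - 2) / (3 * z) ≤ 4/9 := by
      rw [div_le_div_iff₀ hz0 (by norm_num)]
      linarith
    calc Real.sqrt ((3 + z - 2) / (3 * z)) ≤ Real.sqrt (4/9) :=
          Real.sqrt_le_sqrt this
      _ = 2/3 := by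
          rw [show (4:ℝ)/9 = (2/3)^2 by norm_num, Real.sqrt_sq (by norm_num)]
  have h3 : (2:ℝ)/3 < Real.sqrt (1/2) := by
    rw [show (2:ℝ)/3 = Real.sqrt ((2/3)^2) from (Real.sqrt_sq (by norm_num)).symm]
    apply Real.sqrt_lt_sqrt (by positivity)
    norm_num
  have hf13 : f 1 3 = Real.sqrt (1/2) - Real.sqrt (2/3) := by
    simp only [f]
    norm_num
  simp only [f, hf13]
  linarith
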